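/- Let G be a connected bipartite graph with bipartition (A,B) and |A| = |B| ≥ 1. Then γ(G) = |A| if and only if G is the 4-cycle C₄ or G is the corona F ∘ K₁ of some connected bipartite graph F. -/

import Mathlib

/-!
Let `D` be a minimum dominating set, so that `2 |D| = n`. By Ore's argument every vertex of `D`
has a neighbour outside `D`, and if some `X ⊆ D` had fewer than `|X|` neighbours outside `D`,
trading `X` for them would give a smaller dominating set; so by Hall's theorem `D` is matched onto
its complement, and `G` has a perfect matching `m` of which `D` is a transversal.

Every transversal of `m` dominates `G`. If `x` and `m x` had neighbours `a` and `b` outside their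
pair lying in two different pairs, a transversal through `a` and `b` would still dominate after
dropping its vertex of `{x, m x}`, contradicting minimality. Hence `b = m a`, and the pairs
`{x, m x}` and `{a, m a}` span a 4-cycle that is a whole component, so `G = C₄`. Otherwise every
pair has a pendant end, and `G` is the corona of the graph induced on the other ends, which is
connected and bipartite along with `G`. Conversely `γ(C₄) = 2` and `γ(F ∘ K₁) = |F|`, since each
pendant pair must contain a vertex of any dominating set.
-/

open Finset

variable {V : Type} [Fintype V] [DecidableEq V]

def IsDomSet (G : SimpleGraph V) (D : Finset V) : Prop :=
  ∀ v : V, v ∉ D → ∃ u ∈ D, G.Adj u v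

noncomputable def domNum (G : SimpleGraph V) : ℕ :=
  sInf {n | ∃ D : Finset V, IsDomSet G D ∧ D.card = n}

def IsVertexCover (G : SimpleGraph V) (C : Finset V) : Prop :=
  ∀ ⦃u v : V⦄, G.Adj u v → u ∈ C ∨ v ∈ C

noncomputable def coverNum (G : SimpleGraph V) : ℕ :=
  sInf {n | ∃ C : Finset V, IsVertexCover G C ∧ C.card = n}

def IsIndepFinset (G : SimpleGraph V) (I : Finset V) : Prop :=
  ∀ u ∈ I, ∀ v ∈ I, ¬ G.Adj u v

noncomputable def indepNum (G : SimpleGraph V) : ℕ :=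
  sSup {n | ∃ I : Finset V, IsIndepFinset G I ∧ I.card = n}

def IsLeaf (G : SimpleGraph V) [DecidableRel G.Adj] (v : V) : Prop :=
  G.degree v = 1

def IsSupport (G : SimpleGraph V) [DecidableRel G.Adj] (v : V) : Prop :=
  ∃ u, G.Adj v u ∧ IsLeaf G u

def IsWeakSupport (G : SimpleGraph V) [DecidableRel G.Adj] (v : V) : Prop :=
  ((G.neighborFinset v).filter fun l => G.degree l = 1).card = 1

def IsBipartition (G : SimpleGraph V) (A B : Finset V) : Prop :=
  A ∪ B = Finset.univ ∧ Disjoint A B ∧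
    ∀ ⦃u v : V⦄, G.Adj u v → (u ∈ A ∧ v ∈ B) ∨ (u ∈ B ∧ v ∈ A)

def corona {W : Type} (F : SimpleGraph W) : SimpleGraph (W ⊕ W) where
  Adj x y :=
    match x, y with
    | Sum.inl u, Sum.inl v => F.Adj u v
    | Sum.inl u, Sum.inr v => u = v
    | Sum.inr u, Sum.inl v => u = v
    | Sum.inr _, Sum.inr _ => False
  symm := by
    constructor
    intro x y h
    cases x <;> cases y <;> simp_all <;> exact h.symm
  loopless := by
    constructor
    intro x
    cases x <;> simp

section Domination

variable {G : SimpleGraph V} {D : Finset V}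

omit [Fintype V] [DecidableEq V] in
theorem domNum_le_card (hD : IsDomSet G D) : domNum G ≤ D.card :=
  Nat.sInf_le ⟨D, hD, rfl⟩

omit [DecidableEq V] in
theorem exists_isDomSet_card_eq_domNum (G : SimpleGraph V) :
    ∃ D, IsDomSet G D ∧ D.card = domNum G :=
  Nat.sInf_mem (s := {n | ∃ D : Finset V, IsDomSet G D ∧ D.card = n})
    ⟨_, univ, fun v hv => absurd (mem_univ v) hv, rfl⟩

omit [Fintype V] [DecidableEq V] in
theorem IsDomSet.map {W : Type} {H : SimpleGraph W} (e : G ≃g H) (hD : IsDomSet G D) :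
    IsDomSet H (D.map e.toEquiv.toEmbedding) := by
  intro w hw
  obtain ⟨u, hu, hadj⟩ := hD (e.symm w) fun h => hw (mem_map_equiv.2 h)
  exact ⟨e u, mem_map_of_mem _ hu, by simpa using e.map_adj_iff.2 hadj⟩

omit [DecidableEq V] in
theorem domNum_le_of_iso {W : Type} {H : SimpleGraph W} (e : G ≃g H) : domNum H ≤ domNum G := by
  obtain ⟨D, hD, hcard⟩ := exists_isDomSet_card_eq_domNum G
  exact hcard ▸ card_map e.toEquiv.toEmbedding ▸ domNum_le_card (hD.map e)

omit [DecidableEq V] in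
theorem domNum_congr {W : Type} [Fintype W] {H : SimpleGraph W} (e : G ≃g H) :
    domNum G = domNum H :=
  le_antisymm (domNum_le_of_iso e.symm) (domNum_le_of_iso e)

omit [Fintype V] in
theorem IsDomSet.exists_adj_notMem (hdeg : ∀ v, ∃ w, G.Adj v w) (hD : IsDomSet G D)
    (hmin : D.card = domNum G) {d : V} (hd : d ∈ D) : ∃ w ∉ D, G.Adj d w := by
  by_contra! hcon
  have hdom : IsDomSet G (D.erase d) := by
    intro v hv
    by_cases hvd : v = d
    · subst hvd
      obtain ⟨w, hw⟩ := hdeg v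
      exact ⟨w, mem_erase.2 ⟨hw.ne', by_contra fun h => hcon w h hw⟩, hw.symm⟩
    · obtain ⟨u, hu, hadj⟩ := hD v fun h => hv (mem_erase.2 ⟨hvd, h⟩)
      refine ⟨u, mem_erase.2 ⟨?_, hu⟩, hadj⟩
      rintro rfl
      exact hcon v (fun h => hv (mem_erase.2 ⟨hvd, h⟩)) hadj
  have := domNum_le_card hdom
  rw [card_erase_of_mem hd] at this
  have := card_pos.2 ⟨d, hd⟩
  omega

theorem IsDomSet.card_le_card_biUnion_neighborFinset_sdiff [DecidableRel G.Adj]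
    (hdeg : ∀ v, ∃ w, G.Adj v w) (hD : IsDomSet G D) (hmin : D.card = domNum G)
    {X : Finset V} (hX : X ⊆ D) :
    X.card ≤ (X.biUnion fun x => G.neighborFinset x \ D).card := by
  set N := X.biUnion fun x => G.neighborFinset x \ D
  have hdom : IsDomSet G (D \ X ∪ N) := by
    intro v hv
    simp only [mem_union, mem_sdiff, not_or, not_and, not_not] at hv
    by_cases hvD : v ∈ D
    · obtain ⟨w, hwD, hvw⟩ := hD.exists_adj_notMem hdeg hmin hvD
      refine ⟨w, mem_union_right _ (mem_biUnion.2 ⟨v, hv.1 hvD, ?_⟩), hvw.symm⟩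
      simp [hwD, hvw]
    · obtain ⟨u, hu, huv⟩ := hD v hvD
      by_cases huX : u ∈ X
      · exact absurd (mem_biUnion.2 ⟨u, huX, by simp [hvD, huv]⟩) hv.2
      · exact ⟨u, mem_union_left _ (mem_sdiff.2 ⟨hu, huX⟩), huv⟩
  have := (domNum_le_card hdom).trans (card_union_le _ _)
  rw [card_sdiff_of_subset hX] at this
  have := card_le_card hX
  omega

theorem IsDomSet.exists_injective_adj_notMem (hdeg : ∀ v, ∃ w, G.Adj v w) (hD : IsDomSet G D)
    (hmin : D.card = domNum G) :
    ∃ f : D → V, Function.Injective f ∧ ∀ d, f d ∉ D ∧ G.Adj d (f d) := by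
  classical
  obtain ⟨f, hf, hfD⟩ := (all_card_le_biUnion_card_iff_exists_injective
    fun d : D => G.neighborFinset d \ D).1 fun s => by
      have := hD.card_le_card_biUnion_neighborFinset_sdiff hdeg hmin (X := s.image Subtype.val)
        fun x hx => by obtain ⟨d, -, rfl⟩ := mem_image.1 hx; exact d.2
      rwa [image_biUnion, card_image_of_injective _ Subtype.val_injective] at this
  exact ⟨f, hf, fun d => by simpa [and_comm] using hfD d⟩

end Domination

def IsTransversal (m : V → V) (D : Finset V) : Prop :=
  ∀ v, v ∈ D ↔ m v ∉ D

section Transversal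

variable {G : SimpleGraph V} {m : V → V} {D : Finset V}

omit [Fintype V] in
theorem exists_involutive_isTransversal (e : D ≃ {v // v ∉ D}) :
    ∃ m : V → V, Function.Involutive m ∧ IsTransversal m D ∧ ∀ d : D, m d = e d := by
  refine ⟨fun v => if h : v ∈ D then e ⟨v, h⟩ else e.symm ⟨v, h⟩, fun v => ?_, fun v => ?_,
    fun d => by simp⟩
  all_goals by_cases h : v ∈ D <;> simp [h, (e _).2, (e.symm _).2]

theorem IsDomSet.exists_involutive_adj (hdeg : ∀ v, ∃ w, G.Adj v w) (hD : IsDomSet G D)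
    (hmin : D.card = domNum G) (hhalf : 2 * D.card = Fintype.card V) :
    ∃ m : V → V, Function.Involutive m ∧ (∀ v, G.Adj v (m v)) ∧ IsTransversal m D := by
  obtain ⟨f, hf, hfD⟩ := hD.exists_injective_adj_notMem hdeg hmin
  let g : D → {v // v ∉ D} := fun d => ⟨f d, (hfD d).1⟩
  have hg : Function.Bijective g := by
    refine (Fintype.bijective_iff_injective_and_card g).2
      ⟨fun a b h => hf (congrArg Subtype.val h), ?_⟩
    rw [Fintype.card_coe, Fintype.card_subtype_compl, Fintype.card_coe]
    omega
  obtain ⟨m, hm, hDm, hmg⟩ := exists_involutive_isTransversal (Equiv.ofBijective g hg)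
  have hadjD : ∀ d ∈ D, G.Adj d (m d) := fun d hd => by simpa [hmg ⟨d, hd⟩, g] using (hfD ⟨d, hd⟩).2
  refine ⟨m, hm, fun v => ?_, hDm⟩
  by_cases hv : v ∈ D
  · exact hadjD v hv
  · simpa [hm v] using (hadjD (m v) (by_contra fun h => hv ((hDm v).2 h))).symm

omit [Fintype V] in
theorem IsTransversal.insert_erase (hm : Function.Involutive m) (hfix : ∀ v, m v ≠ v)
    (hD : IsTransversal m D) (z : V) : IsTransversal m (insert z (D.erase (m z))) := by
  intro v
  have := hD v
  have := hfix z
  by_cases hvz : v = z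
  · subst hvz; simp_all
  by_cases hvmz : v = m z
  · subst hvmz; simp_all [hm z]
  have : m v ≠ z := fun h => hvmz (h ▸ (hm v).symm)
  have : m v ≠ m z := fun h => hvz (hm.injective h)
  simp_all

omit [Fintype V] in
theorem IsTransversal.card_insert_erase (hD : IsTransversal m D) (z : V) :
    (insert z (D.erase (m z))).card = D.card := by
  by_cases hz : z ∈ D
  · rw [erase_eq_of_notMem ((hD z).1 hz), insert_eq_of_mem hz]
  · have hmz : m z ∈ D := by by_contra h; exact hz ((hD z).2 h)
    rw [card_insert_of_notMem fun h => hz (mem_of_mem_erase h), card_erase_of_mem hmz]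
    have := card_pos.2 ⟨_, hmz⟩
    omega

omit [Fintype V] in
theorem IsTransversal.eq_partner_of_adj (hm : Function.Involutive m) (hadj : ∀ v, G.Adj v (m v))
    (hD : IsTransversal m D) (hmin : D.card ≤ domNum G) {x a b : V}
    (hxa : G.Adj x a) (hb : G.Adj (m x) b) (ha : a ≠ m x) (hbx : b ≠ x) : b = m a := by
  by_contra hba
  have hfix : ∀ v, m v ≠ v := fun v => (hadj v).ne'
  set D₂ := insert b ((insert a (D.erase (m a))).erase (m b))
  have hD₂ : IsTransversal m D₂ := (hD.insert_erase hm hfix a).insert_erase hm hfix b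
  have hcard : D₂.card = D.card := by
    rw [(hD.insert_erase hm hfix a).card_insert_erase, hD.card_insert_erase]
  have haD₂ : a ∈ D₂ := by
    have : a ≠ m b := fun h => hba (h ▸ (hm b).symm)
    simp [D₂, this]
  set y := if x ∈ D₂ then x else m x
  have hy : y ∈ D₂ := by
    by_cases hx : x ∈ D₂
    · simp [y, hx]
    · simpa [y, hx] using (by_contra fun h => hx ((hD₂ x).2 h) : m x ∈ D₂)
  have hxy : ∀ z, z ≠ x → z ≠ m x → z ≠ y := by
    intro z h1 h2; by_cases hx : x ∈ D₂ <;> simp [y, hx, h1, h2]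
  have hdom : IsDomSet G (D₂.erase y) := by
    intro z hz
    by_cases hzx : z = x ∨ z = m x
    · rcases hzx with rfl | rfl
      · exact ⟨a, mem_erase.2 ⟨hxy a hxa.ne' ha, haD₂⟩, hxa.symm⟩
      · exact ⟨b, mem_erase.2 ⟨hxy b hbx hb.ne', mem_insert_self _ _⟩, hb.symm⟩
    · rw [not_or] at hzx
      have hzD₂ : z ∉ D₂ := fun h => hz (mem_erase.2 ⟨hxy z hzx.1 hzx.2, h⟩)
      refine ⟨m z, mem_erase.2 ⟨hxy _ ?_ ?_, ?_⟩, by simpa only [hm z] using hadj (m z)⟩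
      · exact fun h => hzx.2 (h ▸ (hm z).symm)
      · exact fun h => hzx.1 (hm.injective h)
      · by_contra h; exact hzD₂ ((hD₂ z).2 h)
  have := (domNum_le_card hdom).trans_lt (card_erase_lt_of_mem hy)
  omega

end Transversal

def IsClosedSquare (G : SimpleGraph V) (a b c d : V) : Prop :=
  a ≠ c ∧ b ≠ d ∧ ∀ v, (G.Adj a v ↔ v = b ∨ v = d) ∧ (G.Adj b v ↔ v = a ∨ v = c) ∧
    (G.Adj c v ↔ v = b ∨ v = d) ∧ (G.Adj d v ↔ v = a ∨ v = c)

section Square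

variable {G : SimpleGraph V} {m : V → V} {D : Finset V}

omit [Fintype V] in
theorem IsTransversal.isClosedSquare (hm : Function.Involutive m) (hadj : ∀ v, G.Adj v (m v))
    (hD : IsTransversal m D) (hmin : D.card ≤ domNum G) {x a b : V}
    (hxa : G.Adj x a) (ha : a ≠ m x) (hb : G.Adj (m x) b) (hbx : b ≠ x) :
    IsClosedSquare G x (m x) (m a) a := by
  have H : ∀ {x a b}, G.Adj x a → G.Adj (m x) b → a ≠ m x → b ≠ x → b = m a :=
    fun hxa hb ha hbx => hD.eq_partner_of_adj hm hadj hmin hxa hb ha hbx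
  obtain rfl := H hxa hb ha hbx
  have hxma : x ≠ m a := fun h => ha (h ▸ (hm a).symm)
  have hadj' : ∀ v, G.Adj (m v) v := fun v => by simpa only [hm v] using hadj (m v)
  refine ⟨hxma, ha.symm, fun v => ⟨⟨fun h => ?_, ?_⟩, ⟨fun h => ?_, ?_⟩, ⟨fun h => ?_, ?_⟩,
    ⟨fun h => ?_, ?_⟩⟩⟩
  · by_contra! hv
    exact hv.2 (hm.injective (H h hb hv.1 hbx)).symm
  · rintro (rfl | rfl); exacts [hadj _, hxa]
  · by_contra! hv
    exact hv.2 (H hxa h ha hv.1)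
  · rintro (rfl | rfl); exacts [hadj' _, hb]
  · by_contra! hv
    exact hv.1 (H hxa.symm h hxma hv.2)
  · rintro (rfl | rfl); exacts [hb.symm, hadj' _]
  · by_contra! hv
    exact hv.1 (hm.injective (H h hb.symm hv.2 ha.symm)).symm
  · rintro (rfl | rfl); exacts [hxa.symm, hadj _]

omit [Fintype V] in
theorem IsTransversal.exists_isClosedSquare_or_pendant (hm : Function.Involutive m)
    (hadj : ∀ v, G.Adj v (m v)) (hD : IsTransversal m D) (hmin : D.card ≤ domNum G) :
    (∃ x a, IsClosedSquare G x (m x) (m a) a) ∨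
      ∀ x, (∀ a, G.Adj x a → a = m x) ∨ ∀ b, G.Adj (m x) b → b = x := by
  by_cases h : ∀ x, (∀ a, G.Adj x a → a = m x) ∨ ∀ b, G.Adj (m x) b → b = x
  · exact .inr h
  · simp only [not_forall, not_or, exists_prop] at h
    obtain ⟨x, ⟨a, hxa, ha⟩, b, hb, hbx⟩ := h
    exact .inl ⟨x, a, hD.isClosedSquare hm hadj hmin hxa ha hb hbx⟩

end Square

omit [Fintype V] [DecidableEq V] in
theorem SimpleGraph.Connected.forall_mem_of_adj_mem {G : SimpleGraph V} (hconn : G.Connected)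
    {s : Set V} {a : V} (ha : a ∈ s) (hs : ∀ u v, u ∈ s → G.Adj u v → v ∈ s) (v : V) :
    v ∈ s := by
  have := SimpleGraph.reachable_iff_reflTransGen a v |>.1 (hconn.preconnected a v)
  induction this with
  | refl => exact ha
  | tail _ huv ih => exact hs _ _ ih huv

omit [Fintype V] [DecidableEq V] in
theorem SimpleGraph.Connected.nonempty_iso_cycleGraph_four {G : SimpleGraph V}
    (hconn : G.Connected) {a b c d : V} (hsq : IsClosedSquare G a b c d) :
    Nonempty (G ≃g SimpleGraph.cycleGraph 4) := by
  obtain ⟨hac, hbd, hN⟩ := hsq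
  have hab := ((hN b).1.2 (Or.inl rfl)).ne
  have hbc := ((hN c).2.1.2 (Or.inr rfl)).ne
  have hcd := ((hN d).2.2.1.2 (Or.inr rfl)).ne
  have hda := ((hN a).2.2.2.2 (Or.inl rfl)).ne
  have hmem : ∀ v, v ∈ ({a, b, c, d} : Set V) :=
    hconn.forall_mem_of_adj_mem (a := a) (by simp) <| by
      rintro u v (rfl | rfl | rfl | rfl) h <;>
        simp only [hN, Set.mem_insert_iff, Set.mem_singleton_iff] at h ⊢ <;> tauto
  let g : Fin 4 → V := ![a, b, c, d]
  have hg : Function.Bijective g := by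
    refine ⟨fun i j h => ?_, fun v => ?_⟩
    · fin_cases i <;> fin_cases j <;> simp_all [g, eq_comm]
    · rcases hmem v with rfl | rfl | rfl | rfl
      exacts [⟨0, rfl⟩, ⟨1, rfl⟩, ⟨2, rfl⟩, ⟨3, rfl⟩]
  refine ⟨(RelIso.mk (Equiv.ofBijective g hg) fun {i j} => ?_).symm⟩
  fin_cases i <;> fin_cases j <;>
    simp [g, hN, SimpleGraph.cycleGraph_adj, hab, hbc, hcd, hda, hac, hbd, hab.symm, hbc.symm,
      hcd.symm, hda.symm, hac.symm, hbd.symm] <;> decide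

section Corona

variable {G : SimpleGraph V} {m : V → V} {D S : Finset V}

/-- Ties, pairs whose both ends are pendant, are broken by the transversal `D`. -/
theorem IsTransversal.exists_pendant_transversal (hm : Function.Involutive m)
    (hD : IsTransversal m D)
    (hpend : ∀ x, (∀ a, G.Adj x a → a = m x) ∨ ∀ b, G.Adj (m x) b → b = x) :
    ∃ S, IsTransversal m S ∧ ∀ s ∈ S, ∀ w, G.Adj (m s) w → w = s := by
  classical
  refine ⟨univ.filter fun v => (∀ w, G.Adj (m v) w → w = v) ∧
    ((∀ w, G.Adj v w → w = m v) → v ∈ D), fun v => ?_, fun s hs => (mem_filter.1 hs).2.1⟩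
  simp only [mem_filter, mem_univ, true_and, hm v]
  have := hD v
  have := hpend v
  tauto

omit [Fintype V] in
theorem IsTransversal.nonempty_iso_corona (hm : Function.Involutive m)
    (hadj : ∀ v, G.Adj v (m v)) (hS : IsTransversal m S)
    (hpend : ∀ s ∈ S, ∀ w, G.Adj (m s) w → w = s) :
    Nonempty (G ≃g corona (G.induce (S : Set V))) := by
  have hmS : ∀ s ∈ S, m s ∉ S := fun s hs => (hS s).1 hs
  let g : (S : Set V) ⊕ (S : Set V) → V := Sum.elim Subtype.val (m ∘ Subtype.val)
  have hg : Function.Bijective g := by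
    refine ⟨?_, fun v => ?_⟩
    · rintro (s | s) (t | t) h
      · exact congrArg Sum.inl (Subtype.ext h)
      · exact hmS t t.2 ((show (s : V) = m t from h) ▸ s.2) |>.elim
      · exact hmS s s.2 ((show m s = (t : V) from h) ▸ t.2) |>.elim
      · exact congrArg Sum.inr (Subtype.ext (hm.injective h))
    · by_cases hv : v ∈ S
      · exact ⟨Sum.inl ⟨v, hv⟩, rfl⟩
      · exact ⟨Sum.inr ⟨m v, by_contra fun h => hv ((hS v).2 h)⟩, hm v⟩
  refine ⟨(RelIso.mk (Equiv.ofBijective g hg) fun {x y} => ?_).symm⟩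
  rcases x with s | s <;> rcases y with t | t
  · exact Iff.rfl
  · show G.Adj s (m t) ↔ s = t
    refine ⟨fun h => Subtype.ext (hpend t t.2 s h.symm), ?_⟩
    rintro rfl
    exact hadj s
  · show G.Adj (m s) t ↔ s = t
    refine ⟨fun h => Subtype.ext (hpend s s.2 t h).symm, ?_⟩
    rintro rfl
    exact (hadj s).symm
  · show G.Adj (m s) (m t) ↔ False
    exact iff_false_intro fun h => hmS t t.2 (hpend s s.2 _ h ▸ s.2)

end Corona

theorem SimpleGraph.Connected.nonempty_iso_cycleGraph_four_or_corona [Nontrivial V]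
    {G : SimpleGraph V} (hconn : G.Connected) (hγ : 2 * domNum G = Fintype.card V) :
    Nonempty (G ≃g SimpleGraph.cycleGraph 4) ∨
      ∃ S : Finset V, Nonempty (G ≃g corona (G.induce (S : Set V))) := by
  obtain ⟨D, hD, hDcard⟩ := exists_isDomSet_card_eq_domNum G
  obtain ⟨m, hm, hadj, hDm⟩ :=
    hD.exists_involutive_adj hconn.preconnected.exists_adj_of_nontrivial hDcard (by omega)
  rcases hDm.exists_isClosedSquare_or_pendant hm hadj hDcard.le with ⟨x, a, hsq⟩ | hpend
  · exact .inl (hconn.nonempty_iso_cycleGraph_four hsq)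
  · obtain ⟨S, hS, hpend⟩ := hDm.exists_pendant_transversal hm hpend
    exact .inr ⟨S, hS.nonempty_iso_corona hm hadj hpend⟩

theorem connected_of_connected_corona {W : Type} {F : SimpleGraph W}
    (h : (corona F).Connected) : F.Connected := by
  obtain ⟨x⟩ := h.nonempty
  have : Nonempty W := ⟨Sum.elim id id x⟩
  refine ⟨fun u v => (SimpleGraph.reachable_iff_reflTransGen u v).2 ?_⟩
  refine Relation.ReflTransGen.lift' (Sum.elim id id) (fun x y hxy => ?_) _ _
    ((SimpleGraph.reachable_iff_reflTransGen _ _).1 (h.preconnected (.inl u) (.inl v)))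
  rcases x with x | x <;> rcases y with y | y
  · exact .single hxy
  · obtain rfl : x = y := hxy
    exact .refl
  · obtain rfl : x = y := hxy
    exact .refl
  · exact hxy.elim

theorem IsBipartition.colorable_two {G : SimpleGraph V} {A B : Finset V}
    (h : IsBipartition G A B) : G.Colorable 2 := by
  refine ⟨SimpleGraph.Coloring.mk (fun v => if v ∈ A then 0 else 1) fun {u v} huv => ?_⟩
  rcases h.2.2 huv with ⟨hu, hv⟩ | ⟨hu, hv⟩
  · simp [hu, disjoint_right.1 h.2.1 hv]
  · simp [hv, disjoint_right.1 h.2.1 hu]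

theorem domNum_corona {W : Type} [Fintype W] (F : SimpleGraph W) :
    domNum (corona F) = Fintype.card W := by
  refine le_antisymm ?_ ?_
  · have hdom : IsDomSet (corona F) (univ.map ⟨Sum.inl, Sum.inl_injective⟩) := by
      rintro (w | w) hw
      · exact absurd (mem_map_of_mem _ (mem_univ w)) hw
      · exact ⟨.inl w, mem_map_of_mem _ (mem_univ w), rfl⟩
    simpa using domNum_le_card hdom
  · classical
    obtain ⟨D, hD, hcard⟩ := exists_isDomSet_card_eq_domNum (corona F)
    have hsurj : univ ⊆ D.image (Sum.elim id id) := by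
      intro w _
      by_cases hw : Sum.inr w ∈ D
      · exact mem_image_of_mem _ hw
      · obtain ⟨u | u, hu, hadj⟩ := hD _ hw
        · exact mem_image.2 ⟨_, hu, show u = w from hadj⟩
        · exact hadj.elim
    rw [← hcard, ← card_univ]
    exact (card_le_card hsurj).trans card_image_le

theorem domNum_cycleGraph_four : domNum (SimpleGraph.cycleGraph 4) = 2 := by
  refine le_antisymm (domNum_le_card (D := {0, 2}) (by unfold IsDomSet; decide)) ?_
  obtain ⟨D, hD, hcard⟩ := exists_isDomSet_card_eq_domNum (SimpleGraph.cycleGraph 4)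
  have : ∀ D : Finset (Fin 4), IsDomSet (SimpleGraph.cycleGraph 4) D → 2 ≤ D.card := by
    unfold IsDomSet; decide
  exact hcard ▸ this D hD

omit [DecidableEq V] in
theorem two_mul_domNum_of_iso_cycleGraph_four {G : SimpleGraph V}
    (e : G ≃g SimpleGraph.cycleGraph 4) : 2 * domNum G = Fintype.card V := by
  rw [domNum_congr e, domNum_cycleGraph_four, Fintype.card_congr e.toEquiv, Fintype.card_fin]

omit [DecidableEq V] in
theorem two_mul_domNum_of_iso_corona {G : SimpleGraph V} {W : Type} {F : SimpleGraph W}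
    (e : G ≃g corona F) : 2 * domNum G = Fintype.card V := by
  have : Fintype W := Fintype.ofInjective _ (e.symm.injective.comp Sum.inl_injective)
  rw [domNum_congr e, domNum_corona, Fintype.card_congr e.toEquiv, Fintype.card_sum, two_mul]

theorem domNum_eq_half_iff_cycle_or_corona (G : SimpleGraph V)
    (A B : Finset V) (hconn : G.Connected) (hbip : IsBipartition G A B)
    (hA : 1 ≤ A.card) (hAB : A.card = B.card) :
    domNum G = A.card ↔
      (Nonempty (G ≃g SimpleGraph.cycleGraph 4) ∨
        ∃ (W : Type) (F : SimpleGraph W),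
          F.Connected ∧ F.Colorable 2 ∧ Nonempty (G ≃g corona F)) := by
  have hcard : Fintype.card V = 2 * A.card := by
    rw [← card_univ, ← hbip.1, card_union_of_disjoint hbip.2.1]
    omega
  constructor
  · intro hdom
    have : Nontrivial V := Fintype.one_lt_card_iff_nontrivial.1 (by omega)
    rcases hconn.nonempty_iso_cycleGraph_four_or_corona (by omega) with hC4 | ⟨S, ⟨e⟩⟩
    · exact .inl hC4
    · exact .inr ⟨_, _, connected_of_connected_corona (e.connected_iff.1 hconn),
        hbip.colorable_two.of_hom (SimpleGraph.Embedding.induce _).toHom, ⟨e⟩⟩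
  · rintro (⟨⟨e⟩⟩ | ⟨W, F, -, -, ⟨e⟩⟩)
    · have := two_mul_domNum_of_iso_cycleGraph_four e
      omega
    · have := two_mul_domNum_of_iso_corona e
      omega
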